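/- For k ≥ 1 and x_1,…,x_{2k-1} ∈ [0,1], σ_{k+1}(x_1,…,x_{2k-1}) ≤ σ_k(x_1,…,x_{2k-1})^{(k+1)/k}. -/

import Mathlib

def esymm (m ℓ : ℕ) (x : Fin m → ℝ) : ℝ :=
  ∑ I ∈ Finset.powersetCard ℓ (Finset.univ : Finset (Fin m)), ∏ i ∈ I, x i

/-!
Write `e ℓ` for `esymm n ℓ x` with `x ≥ 0`. The key inequality is the weak form of Newton's
inequality `e ℓ * e (ℓ + 2) ≤ e (ℓ + 1) ^ 2`: since `e 0 = 1` and `e ℓ = 0` forces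
`e (ℓ + 1) = 0`, chaining these log-concavity inequalities gives
`e (k + 1) ^ k ≤ e k ^ (k + 1)`, and the claim is its `k`-th root.

The product `e ℓ * e (ℓ + 2)` is a sum over pairs `(A, B)` with `#A = ℓ` and `#B = ℓ + 2`.
Scanning `Fin n` from the left, let `j` be the first point by which `B` has collected one more
element than `A`, and exchange the parts of `A` and `B` beyond `j`. This gives two
`(ℓ + 1)`-sets with the same product of weights, and it is an involution (the pivot `j` does not
move), so it injects the terms of `e ℓ * e (ℓ + 2)` into those of `e (ℓ + 1) ^ 2`.
-/

open Finset

section TailSwap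

variable {n : ℕ}

def prefixCard (A : Finset (Fin n)) (j : ℕ) : ℕ := #{i ∈ A | i.val < j}

lemma prefixCard_zero (A : Finset (Fin n)) : prefixCard A 0 = 0 := by
  simp [prefixCard]

lemma prefixCard_self (A : Finset (Fin n)) : prefixCard A n = #A := by
  simp [prefixCard]

lemma prefixCard_le_succ (A : Finset (Fin n)) (j : ℕ) : prefixCard A j ≤ prefixCard A (j + 1) :=
  card_le_card fun i hi => by
    simp only [mem_filter] at hi ⊢
    exact ⟨hi.1, by omega⟩

lemma prefixCard_succ_le (A : Finset (Fin n)) (j : ℕ) :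
    prefixCard A (j + 1) ≤ prefixCard A j + 1 := by
  have hnew : #({i ∈ A | i.val < j + 1} \ {i ∈ A | i.val < j}) ≤ 1 :=
    card_le_one.2 fun a ha b hb => by
      simp only [mem_sdiff, mem_filter, not_and, not_lt] at ha hb
      exact Fin.ext (by have := ha.2 ha.1.1; have := hb.2 hb.1.1; omega)
  have := card_le_card_sdiff_add_card (s := {i ∈ A | i.val < j + 1}) (t := {i ∈ A | i.val < j})
  unfold prefixCard
  omega

def prefixExcess (A B : Finset (Fin n)) (j : ℕ) : ℤ := prefixCard B j - prefixCard A j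

lemma prefixExcess_succ_le (A B : Finset (Fin n)) (j : ℕ) :
    prefixExcess A B (j + 1) ≤ prefixExcess A B j + 1 := by
  have := prefixCard_succ_le B j
  have := prefixCard_le_succ A j
  unfold prefixExcess
  omega

def tailSwap (j : ℕ) (A B : Finset (Fin n)) : Finset (Fin n) :=
  {i ∈ A | i.val < j} ∪ {i ∈ B | ¬ i.val < j}

lemma mem_tailSwap {j : ℕ} {A B : Finset (Fin n)} {i : Fin n} :
    i ∈ tailSwap j A B ↔ (i ∈ A ∧ i.val < j) ∨ (i ∈ B ∧ ¬ i.val < j) := by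
  simp [tailSwap]

lemma tailSwap_tailSwap (j : ℕ) (A B : Finset (Fin n)) :
    tailSwap j (tailSwap j A B) (tailSwap j B A) = A := by
  ext i
  by_cases h : i.val < j <;> simp [mem_tailSwap, h]

lemma prod_tailSwap_mul_prod_tailSwap {M : Type*} [CommMonoid M] (f : Fin n → M) (j : ℕ)
    (A B : Finset (Fin n)) :
    (∏ i ∈ tailSwap j A B, f i) * ∏ i ∈ tailSwap j B A, f i
      = (∏ i ∈ A, f i) * ∏ i ∈ B, f i := by
  rw [tailSwap, tailSwap, prod_union (disjoint_filter_filter_not A B _),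
    prod_union (disjoint_filter_filter_not B A _),
    ← prod_filter_mul_prod_filter_not A (fun i => i.val < j),
    ← prod_filter_mul_prod_filter_not B (fun i => i.val < j)]
  ac_rfl

lemma card_tailSwap_add_prefixCard (j : ℕ) (A B : Finset (Fin n)) :
    #(tailSwap j A B) + prefixCard B j = prefixCard A j + #B := by
  rw [tailSwap, card_union_of_disjoint (disjoint_filter_filter_not A B _), prefixCard, prefixCard,
    ← card_filter_add_card_filter_not (s := B) (fun i => i.val < j)]
  ring

lemma prefixCard_tailSwap_of_le {j m : ℕ} (hm : m ≤ j) (A B : Finset (Fin n)) :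
    prefixCard (tailSwap j A B) m = prefixCard A m := by
  unfold prefixCard
  congr 1
  ext i
  simp only [mem_filter, mem_tailSwap]
  constructor
  · rintro ⟨⟨hA, -⟩ | ⟨-, hj⟩, hi⟩ <;> [exact ⟨hA, hi⟩; omega]
  · rintro ⟨hA, hi⟩
    exact ⟨.inl ⟨hA, by omega⟩, hi⟩

lemma prefixExcess_tailSwap_of_le {j m : ℕ} (hm : m ≤ j) (A B : Finset (Fin n)) :
    prefixExcess (tailSwap j A B) (tailSwap j B A) m = prefixExcess A B m := by
  simp only [prefixExcess, prefixCard_tailSwap_of_le hm]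

open Classical in
noncomputable def swapAtPivot (p : Finset (Fin n) × Finset (Fin n)) :
    Finset (Fin n) × Finset (Fin n) :=
  if h : ∃ j, 1 ≤ prefixExcess p.1 p.2 j then
    (tailSwap (Nat.find h) p.1 p.2, tailSwap (Nat.find h) p.2 p.1)
  else p

lemma swapAtPivot_of_exists {p : Finset (Fin n) × Finset (Fin n)}
    (h : ∃ j, 1 ≤ prefixExcess p.1 p.2 j) :
    swapAtPivot p = (tailSwap (Nat.find h) p.1 p.2, tailSwap (Nat.find h) p.2 p.1) := by
  rw [swapAtPivot, dif_pos h]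

lemma swapAtPivot_of_not_exists {p : Finset (Fin n) × Finset (Fin n)}
    (h : ¬ ∃ j, 1 ≤ prefixExcess p.1 p.2 j) : swapAtPivot p = p := by
  rw [swapAtPivot, dif_neg h]

lemma swapAtPivot_involutive : Function.Involutive (swapAtPivot (n := n)) := by
  intro p
  by_cases h : ∃ j, 1 ≤ prefixExcess p.1 p.2 j
  · have hsame : ∀ m ≤ Nat.find h,
        prefixExcess (swapAtPivot p).1 (swapAtPivot p).2 m = prefixExcess p.1 p.2 m := by
      intro m hm
      rw [swapAtPivot_of_exists h]
      exact prefixExcess_tailSwap_of_le hm p.1 p.2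
    have h' : ∃ j, 1 ≤ prefixExcess (swapAtPivot p).1 (swapAtPivot p).2 j :=
      ⟨Nat.find h, (hsame _ le_rfl).symm ▸ Nat.find_spec h⟩
    have hfind : Nat.find h' = Nat.find h :=
      (Nat.find_eq_iff h').2 ⟨(hsame _ le_rfl).symm ▸ Nat.find_spec h,
        fun m hm => hsame m hm.le ▸ Nat.find_min h hm⟩
    rw [swapAtPivot_of_exists h', hfind, swapAtPivot_of_exists h]
    simp only [tailSwap_tailSwap]
  · rw [swapAtPivot_of_not_exists h, swapAtPivot_of_not_exists h]

lemma prod_mul_prod_swapAtPivot {M : Type*} [CommMonoid M] (f : Fin n → M)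
    (p : Finset (Fin n) × Finset (Fin n)) :
    (∏ i ∈ (swapAtPivot p).1, f i) * ∏ i ∈ (swapAtPivot p).2, f i
      = (∏ i ∈ p.1, f i) * ∏ i ∈ p.2, f i := by
  by_cases h : ∃ j, 1 ≤ prefixExcess p.1 p.2 j
  · rw [swapAtPivot_of_exists h]
    exact prod_tailSwap_mul_prod_tailSwap f _ p.1 p.2
  · rw [swapAtPivot_of_not_exists h]

/-- The prefix excess rises from `0` to `2` by steps of at most one, so where it first reaches `1`
it equals `1`; exchanging the tails there leaves `#A + 1` elements on each side. -/
lemma card_swapAtPivot {A B : Finset (Fin n)} (hAB : #B = #A + 2) :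
    #(swapAtPivot (A, B)).1 = #A + 1 ∧ #(swapAtPivot (A, B)).2 = #A + 1 := by
  have h : ∃ j, 1 ≤ prefixExcess A B j :=
    ⟨n, by simp [prefixExcess, prefixCard_self, hAB]⟩
  obtain ⟨j, hj⟩ : ∃ j, Nat.find h = j + 1 := by
    refine Nat.exists_eq_add_one.2 (Nat.pos_of_ne_zero fun h0 => ?_)
    have := h0 ▸ Nat.find_spec h
    simp [prefixExcess, prefixCard_zero] at this
  have hbefore : ¬ 1 ≤ prefixExcess A B j := Nat.find_min h (by omega)
  have hstep := prefixExcess_succ_le A B j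
  have hat : 1 ≤ prefixExcess A B (j + 1) := hj ▸ Nat.find_spec h
  have c₁ := card_tailSwap_add_prefixCard (j + 1) A B
  have c₂ := card_tailSwap_add_prefixCard (j + 1) B A
  rw [swapAtPivot_of_exists h, hj]
  dsimp only
  simp only [prefixExcess] at hbefore hstep hat
  omega

end TailSwap

section Esymm

variable {n : ℕ} {x : Fin n → ℝ}

lemma esymm_zero (x : Fin n → ℝ) : esymm n 0 x = 1 := by
  simp [esymm]

lemma esymm_nonneg (hx : ∀ i, 0 ≤ x i) (ℓ : ℕ) : 0 ≤ esymm n ℓ x :=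
  sum_nonneg fun _ _ => prod_nonneg fun i _ => hx i

lemma esymm_succ_eq_zero (hx : ∀ i, 0 ≤ x i) {ℓ : ℕ} (h : esymm n ℓ x = 0) :
    esymm n (ℓ + 1) x = 0 := by
  have hzero : ∀ I ∈ powersetCard ℓ (univ : Finset (Fin n)), ∏ i ∈ I, x i = 0 :=
    (sum_eq_zero_iff_of_nonneg fun _ _ => prod_nonneg fun i _ => hx i).1 h
  refine sum_eq_zero fun J hJ => ?_
  have hJcard : #J = ℓ + 1 := (mem_powersetCard.1 hJ).2
  obtain ⟨i, hi⟩ : J.Nonempty := card_pos.1 (by omega)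
  rw [← mul_prod_erase J x hi, hzero _ (mem_powersetCard.2 ⟨subset_univ _, by
    rw [card_erase_of_mem hi, hJcard, Nat.add_sub_cancel]⟩), mul_zero]

theorem esymm_mul_esymm_add_two_le_sq (hx : ∀ i, 0 ≤ x i) (ℓ : ℕ) :
    esymm n ℓ x * esymm n (ℓ + 2) x ≤ esymm n (ℓ + 1) x ^ 2 := by
  set F : Finset (Fin n) × Finset (Fin n) → ℝ :=
    fun p => (∏ i ∈ p.1, x i) * ∏ i ∈ p.2, x i
  set S : Finset (Finset (Fin n) × Finset (Fin n)) :=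
    powersetCard ℓ univ ×ˢ powersetCard (ℓ + 2) univ
  set T : Finset (Finset (Fin n) × Finset (Fin n)) :=
    powersetCard (ℓ + 1) univ ×ˢ powersetCard (ℓ + 1) univ
  have hmaps : ∀ p ∈ S, swapAtPivot p ∈ T := by
    rintro ⟨A, B⟩ hp
    simp only [S, T, mem_product, mem_powersetCard, subset_univ, true_and] at hp ⊢
    have := card_swapAtPivot (A := A) (B := B) (by omega)
    omega
  calc esymm n ℓ x * esymm n (ℓ + 2) x = ∑ p ∈ S, F p := by
        rw [esymm, esymm, sum_mul_sum, sum_product]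
    _ = ∑ p ∈ S.image swapAtPivot, F p := by
        rw [sum_image swapAtPivot_involutive.injective.injOn]
        exact sum_congr rfl fun p _ => (prod_mul_prod_swapAtPivot x p).symm
    _ ≤ ∑ p ∈ T, F p := sum_le_sum_of_subset_of_nonneg (image_subset_iff.2 hmaps)
        fun p _ _ => mul_nonneg (prod_nonneg fun i _ => hx i) (prod_nonneg fun i _ => hx i)
    _ = esymm n (ℓ + 1) x ^ 2 := by
        rw [sq, esymm, sum_mul_sum, sum_product]

end Esymm

lemma pow_succ_le_pow_of_mul_le_sq {a : ℕ → ℝ} (ha : ∀ ℓ, 0 ≤ a ℓ) (h0 : 1 ≤ a 0)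
    (hzero : ∀ ℓ, a ℓ = 0 → a (ℓ + 1) = 0)
    (hlc : ∀ ℓ, a ℓ * a (ℓ + 2) ≤ a (ℓ + 1) ^ 2) :
    ∀ k, a (k + 1) ^ k ≤ a k ^ (k + 1)
  | 0 => by simpa using h0
  | k + 1 => by
    rcases (ha (k + 1)).eq_or_lt with hk | hk
    · rw [hzero _ hk.symm, ← hk, zero_pow k.succ_ne_zero, zero_pow (by omega)]
    · refine le_of_mul_le_mul_right ?_ (pow_pos hk k)
      calc a (k + 2) ^ (k + 1) * a (k + 1) ^ k
          ≤ a (k + 2) ^ (k + 1) * a k ^ (k + 1) :=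
            mul_le_mul_of_nonneg_left (pow_succ_le_pow_of_mul_le_sq ha h0 hzero hlc k)
              (pow_nonneg (ha _) _)
        _ = (a k * a (k + 2)) ^ (k + 1) := by ring
        _ ≤ (a (k + 1) ^ 2) ^ (k + 1) := pow_le_pow_left₀ (mul_nonneg (ha _) (ha _)) (hlc k) _
        _ = a (k + 1) ^ (k + 1 + 1) * a (k + 1) ^ k := by ring

theorem esymm_succ_le_rpow (k : ℕ) (hk : 1 ≤ k) (x : Fin (2*k-1) → ℝ)
    (hx : ∀ i, x i ∈ Set.Icc (0:ℝ) 1) :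
    esymm (2*k-1) (k+1) x ≤ (esymm (2*k-1) k x) ^ (((k:ℝ)+1)/(k:ℝ)) := by
  have hx₀ : ∀ i, 0 ≤ x i := fun i => (hx i).1
  have hpow : esymm _ (k + 1) x ^ k ≤ esymm _ k x ^ (k + 1) :=
    pow_succ_le_pow_of_mul_le_sq (esymm_nonneg hx₀) (esymm_zero x).ge
      (fun _ => esymm_succ_eq_zero hx₀) (esymm_mul_esymm_add_two_le_sq hx₀) k
  have hk₀ : (0 : ℝ) < k := by exact_mod_cast hk
  rw [div_eq_mul_inv, Real.rpow_mul (esymm_nonneg hx₀ k), ← Nat.cast_add_one, Real.rpow_natCast,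
    Real.le_rpow_inv_iff_of_pos (esymm_nonneg hx₀ _) (pow_nonneg (esymm_nonneg hx₀ k) _) hk₀,
    Real.rpow_natCast]
  exact hpow
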